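/- For ν > 1/2 and t > 0, the following differential identity holds: h'_ν(t) = -((2ν-1)/t²) l_ν(t) - ((2ν-1)/t + 2 r_ν(t)) h_ν(t), where r_ν(t) = I_ν(t)/I_{ν-1}(t), h_ν(t) = 1 - (2ν-1)/t² - ((2ν-1)/t) r_ν(t) - r_ν(t)², and l_ν(t) = r_ν(t) - (3-2ν)/t. -/

import Mathlib

open Real Set Filter MeasureTheory

/-- Modified Bessel function of the first kind, `I_ν(t) = Σ_k (t/2)^(2k+ν)/(k! Γ(ν+k+1))`. -/
noncomputable def besselI (ν t : ℝ) : ℝ :=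
  ∑' k : ℕ, (t / 2) ^ (ν + 2 * (k : ℝ)) / ((Nat.factorial k : ℝ) * Real.Gamma (ν + (k : ℝ) + 1))

/-- The ratio `r_ν(t) = I_ν(t)/I_{ν-1}(t)`. -/
noncomputable def besselRatio (ν t : ℝ) : ℝ := besselI ν t / besselI (ν - 1) t

private lemma gamma_fact_lb (μ : ℝ) (hμ : -(1/2) < μ) (k : ℕ) :
    Real.Gamma (μ + 1) * (Nat.factorial k : ℝ) / 2 ^ k ≤ Real.Gamma (μ + (k : ℝ) + 1) := by
  induction k with
  | zero => simp
  | succ n ih =>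
    have hΓ1 : 0 < Real.Gamma (μ + 1) := Real.Gamma_pos_of_pos (by linarith)
    have hn : (0:ℝ) ≤ (n:ℝ) := Nat.cast_nonneg n
    have hpos : (0:ℝ) < μ + (n:ℝ) + 1 := by linarith
    have h1 : Real.Gamma (μ + ((n:ℝ)+1) + 1) = (μ + (n:ℝ) + 1) * Real.Gamma (μ + (n:ℝ) + 1) := by
      rw [show μ + ((n:ℝ)+1) + 1 = (μ + (n:ℝ) + 1) + 1 by ring, Real.Gamma_add_one hpos.ne']
    have hcast : ((n+1 : ℕ) : ℝ) = (n:ℝ) + 1 := by push_cast; ring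
    rw [hcast, h1]
    have hfact : ((Nat.factorial (n+1) : ℕ) : ℝ) = ((n:ℝ)+1) * (Nat.factorial n : ℝ) := by
      rw [Nat.factorial_succ]; push_cast; ring
    rw [hfact]
    have hhalf : ((n:ℝ)+1)/2 ≤ μ + (n:ℝ) + 1 := by linarith
    have hp2 : (0:ℝ) < 2 ^ n := by positivity
    calc Real.Gamma (μ + 1) * (((n:ℝ)+1) * (Nat.factorial n : ℝ)) / 2 ^ (n+1)
        = (((n:ℝ)+1)/2) * (Real.Gamma (μ + 1) * (Nat.factorial n : ℝ) / 2 ^ n) := by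
          rw [pow_succ]; ring
      _ ≤ (μ + (n:ℝ) + 1) * (Real.Gamma (μ + 1) * (Nat.factorial n : ℝ) / 2 ^ n) := by
          apply mul_le_mul_of_nonneg_right hhalf; positivity
      _ ≤ (μ + (n:ℝ) + 1) * Real.Gamma (μ + (n:ℝ) + 1) := by
          apply mul_le_mul_of_nonneg_left ih hpos.le

private lemma summable_aux (μ c y : ℝ) (hμ : -(1/2) < μ) (hc : 0 ≤ c) (hy : 0 ≤ y) :
    Summable (fun k : ℕ => (c + 2 * (k:ℝ)) * y ^ k / ((Nat.factorial k : ℝ) * Real.Gamma (μ + (k:ℝ) + 1))) := by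
  have hΓ1 : 0 < Real.Gamma (μ + 1) := Real.Gamma_pos_of_pos (by linarith)
  have hΓ : ∀ k : ℕ, 0 < Real.Gamma (μ + (k:ℝ) + 1) := fun k =>
    Real.Gamma_pos_of_pos (by have := Nat.cast_nonneg (α := ℝ) k; linarith)
  apply Summable.of_nonneg_of_le
    (f := fun k : ℕ => ((c+2)/Real.Gamma (μ+1)) * ((4*y) ^ k / (Nat.factorial k : ℝ)))
  · intro k
    have := hΓ k
    positivity
  · intro k
    have hΓk := gamma_fact_lb μ hμ k
    have hF : (1:ℝ) ≤ (Nat.factorial k : ℝ) := by exact_mod_cast Nat.one_le_iff_ne_zero.mpr (Nat.factorial_pos k).ne'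
    have hP : (1:ℝ) ≤ 2 ^ k := by { have : (1:ℕ) ≤ 2^k := Nat.one_le_two_pow; exact_mod_cast this }
    have h2k : (k:ℝ) + 1 ≤ 2 ^ k := by exact_mod_cast (Nat.lt_two_pow_self (n := k))
    have hck : c + 2*(k:ℝ) ≤ (c+2) * 2 ^ k := by nlinarith
    have h4 : (4:ℝ) ^ k = 2^k * 2^k := by rw [show (4:ℝ) = 2*2 by norm_num, mul_pow]
    have hlb : 0 < Real.Gamma (μ+1) * (Nat.factorial k : ℝ) / 2 ^ k := by positivity
    calc (c + 2*(k:ℝ)) * y ^ k / ((Nat.factorial k : ℝ) * Real.Gamma (μ + (k:ℝ) + 1))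
        ≤ (c + 2*(k:ℝ)) * y ^ k / ((Nat.factorial k : ℝ) * (Real.Gamma (μ+1) * (Nat.factorial k : ℝ) / 2 ^ k)) := by
          apply div_le_div_of_nonneg_left (by positivity) (by positivity)
          exact mul_le_mul_of_nonneg_left hΓk (by positivity)
      _ ≤ ((c+2)/Real.Gamma (μ+1)) * ((4*y) ^ k / (Nat.factorial k : ℝ)) := by
          rw [mul_pow, h4, div_le_iff₀ (by positivity)]
          have hyk : (0:ℝ) ≤ y ^ k := by positivity
          have key : (c + 2*(k:ℝ)) * 2^k ≤ (c+2) * (2^k * 2^k) := by nlinarith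
          have expand : (c+2)/Real.Gamma (μ+1) * (2^k * 2^k * y^k / (Nat.factorial k:ℝ)) * ((Nat.factorial k:ℝ) * (Real.Gamma (μ+1) * (Nat.factorial k:ℝ) / 2^k))
              = ((c+2) * (2^k*2^k)) * y^k * ((Nat.factorial k:ℝ) / 2^k) := by
            field_simp
          rw [expand]
          have e2 : (c+2)*(2^k*2^k)*y^k*((Nat.factorial k:ℝ)/2^k) = ((c+2)*2^k*(Nat.factorial k:ℝ))*y^k := by
            field_simp
          rw [e2]
          have hstep : c + 2*(k:ℝ) ≤ (c+2)*2^k*(Nat.factorial k:ℝ) := by nlinarith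
          exact mul_le_mul_of_nonneg_right hstep hyk
  · exact ((Real.summable_pow_div_factorial (4*y))).mul_left _

private lemma rpow_split (x μ : ℝ) (hx : 0 < x) (k : ℕ) :
    x ^ (μ + 2 * (k:ℝ)) = x ^ μ * (x ^ 2) ^ k := by
  rw [Real.rpow_add hx, Real.rpow_mul hx.le, Real.rpow_natCast]
  norm_num [Real.rpow_two]

private lemma besselI_summable (μ t : ℝ) (hμ : -(1/2) < μ) (ht : 0 < t) :
    Summable (fun k : ℕ => (t/2) ^ (μ + 2 * (k:ℝ)) / ((Nat.factorial k : ℝ) * Real.Gamma (μ + (k:ℝ) + 1))) := by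
  have ht2 : 0 < t/2 := by linarith
  have hΓ : ∀ k : ℕ, 0 < Real.Gamma (μ + (k:ℝ) + 1) := fun k =>
    Real.Gamma_pos_of_pos (by have := Nat.cast_nonneg (α := ℝ) k; linarith)
  apply Summable.of_nonneg_of_le
    (f := fun k : ℕ => (t/2)^μ * ((1 + 2 * (k:ℝ)) * ((t/2)^2) ^ k / ((Nat.factorial k : ℝ) * Real.Gamma (μ + (k:ℝ) + 1))))
  · intro k; have := hΓ k; positivity
  · intro k
    rw [rpow_split (t/2) μ ht2 k]
    rw [mul_div_assoc]
    apply mul_le_mul_of_nonneg_left _ (by positivity)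
    have := hΓ k
    have hd : (0:ℝ) < (Nat.factorial k : ℝ) * Real.Gamma (μ + (k:ℝ) + 1) := by positivity
    rw [div_le_div_iff₀ hd hd]
    have hk : (0:ℝ) ≤ (k:ℝ) := Nat.cast_nonneg k
    have hx : (0:ℝ) ≤ ((t/2)^2)^k := by positivity
    nlinarith [mul_pos hd hd, mul_nonneg (mul_nonneg hx hd.le) hk]
  · exact (summable_aux μ 1 ((t/2)^2) hμ (by norm_num) (by positivity)).mul_left _

private lemma besselI_pos (μ t : ℝ) (hμ : -(1/2) < μ) (ht : 0 < t) : 0 < besselI μ t := by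
  have ht2 : 0 < t/2 := by linarith
  have hΓ : ∀ k : ℕ, 0 < Real.Gamma (μ + (k:ℝ) + 1) := fun k =>
    Real.Gamma_pos_of_pos (by have := Nat.cast_nonneg (α := ℝ) k; linarith)
  refine Summable.tsum_pos (besselI_summable μ t hμ ht) (fun k => ?_) 0 ?_
  · have := hΓ k; positivity
  · have := hΓ 0
    have : (0:ℝ) < (t/2) ^ (μ + 2 * ((0:ℕ):ℝ)) := Real.rpow_pos_of_pos ht2 _
    have h0 := hΓ 0
    positivity

private lemma hasDerivAt_besselI (μ t : ℝ) (hμ : -(1/2) < μ) (ht : 0 < t) :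
    HasDerivAt (besselI μ)
      (∑' k : ℕ, (μ + 2 * (k:ℝ))/2 * ((t/2) ^ (μ + 2 * (k:ℝ) - 1) / ((Nat.factorial k : ℝ) * Real.Gamma (μ + (k:ℝ) + 1)))) t := by
  have hΓ : ∀ k : ℕ, 0 < Real.Gamma (μ + (k:ℝ) + 1) := fun k =>
    Real.Gamma_pos_of_pos (by have := Nat.cast_nonneg (α := ℝ) k; linarith)
  set C : ℝ := max ((t/4) ^ (μ-1)) (t ^ (μ-1)) with hC
  have hCpos : 0 < C := lt_max_of_lt_right (Real.rpow_pos_of_pos ht _)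
  have hu : Summable (fun k : ℕ => (C/2) * ((|μ| + 2*(k:ℝ)) * (t^2) ^ k / ((Nat.factorial k : ℝ) * Real.Gamma (μ + (k:ℝ) + 1)))) :=
    (summable_aux μ |μ| (t^2) hμ (abs_nonneg μ) (by positivity)).mul_left _
  have key := hasDerivAt_tsum_of_isPreconnected hu isOpen_Ioo
    (isPreconnected_Ioo (a := t/2) (b := 2*t))
    (g := fun (k : ℕ) (y : ℝ) => (y/2) ^ (μ + 2 * (k:ℝ)) / ((Nat.factorial k : ℝ) * Real.Gamma (μ + (k:ℝ) + 1)))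
    (g' := fun (k : ℕ) (y : ℝ) => (μ + 2 * (k:ℝ))/2 * ((y/2) ^ (μ + 2 * (k:ℝ) - 1) / ((Nat.factorial k : ℝ) * Real.Gamma (μ + (k:ℝ) + 1))))
    (y₀ := t) (y := t) ?_ ?_ ?_ ?_ ?_
  · exact key
  · -- HasDerivAt for each term
    intro k y hy
    have hy2 : 0 < y/2 := by have := hy.1; have : t/2 < y := hy.1; linarith
    have h1 : HasDerivAt (fun y : ℝ => y/2) (1/2) y := (hasDerivAt_id y).div_const 2
    have h2 := (Real.hasDerivAt_rpow_const (p := μ + 2 * (k:ℝ)) (Or.inl hy2.ne')).comp y h1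
    have h3 := h2.div_const ((Nat.factorial k : ℝ) * Real.Gamma (μ + (k:ℝ) + 1))
    exact h3.congr_deriv (by ring)
  · -- norm bound
    intro k y hy
    obtain ⟨hy1, hy2⟩ := hy
    have hy0 : 0 < y := lt_trans (by linarith) hy1
    have hy2pos : 0 < y/2 := by linarith
    have hb1 : (y/2) ^ (μ - 1) ≤ C := by
      rcases le_or_gt 0 (μ - 1) with h | h
      · refine le_trans ?_ (le_max_right _ _)
        exact Real.rpow_le_rpow hy2pos.le (by linarith) h
      · refine le_trans ?_ (le_max_left _ _)
        exact Real.rpow_le_rpow_of_nonpos (by linarith) (by linarith) h.le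
    have hb2 : ((y/2)^2) ^ k ≤ (t^2) ^ k := by
      apply pow_le_pow_left₀ (by positivity)
      nlinarith
    have hb3 : |μ + 2 * (k:ℝ)| ≤ |μ| + 2*(k:ℝ) := by
      refine (abs_add_le μ _).trans ?_
      simp [abs_of_nonneg (by positivity : (0:ℝ) ≤ 2*(k:ℝ))]
    have hsplit : (y/2) ^ (μ + 2 * (k:ℝ) - 1) = (y/2) ^ (μ - 1) * ((y/2)^2) ^ k := by
      rw [show μ + 2 * (k:ℝ) - 1 = (μ - 1) + 2 * (k:ℝ) by ring]
      exact rpow_split (y/2) (μ-1) hy2pos k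
    have hΓk := hΓ k
    rw [Real.norm_eq_abs, abs_mul, abs_div, abs_div]
    rw [abs_of_pos (by positivity : (0:ℝ) < (y/2) ^ (μ + 2 * (k:ℝ) - 1)),
        abs_of_pos (by positivity : (0:ℝ) < (Nat.factorial k : ℝ) * Real.Gamma (μ + (k:ℝ) + 1)),
        abs_of_pos (by norm_num : (0:ℝ) < 2)]
    rw [hsplit]
    have hrw : C/2 * ((|μ| + 2*(k:ℝ)) * (t^2) ^ k / ((Nat.factorial k : ℝ) * Real.Gamma (μ + (k:ℝ) + 1)))
        = (|μ| + 2*(k:ℝ))/2 * (C * (t^2) ^ k / ((Nat.factorial k : ℝ) * Real.Gamma (μ + (k:ℝ) + 1))) := by ring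
    rw [hrw]
    gcongr
  · exact ⟨by linarith, by linarith⟩
  · exact besselI_summable μ t hμ ht
  · exact ⟨by linarith, by linarith⟩

private lemma hasDerivAt_besselI_top (ν t : ℝ) (hν : 1/2 < ν) (ht : 0 < t) :
    HasDerivAt (besselI ν) (besselI (ν-1) t - (ν/t) * besselI ν t) t := by
  have hν' : -(1/2) < ν := by linarith
  have hν1 : -(1/2) < ν - 1 := by linarith
  have ht2 : 0 < t/2 := by linarith
  have h := hasDerivAt_besselI ν t hν' ht
  convert h using 1
  have hs1 := besselI_summable (ν-1) t hν1 ht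
  have hs2 := (besselI_summable ν t hν' ht).mul_left (ν/t)
  rw [show besselI (ν-1) t - (ν/t) * besselI ν t
      = ∑' k : ℕ, ((t/2) ^ (ν - 1 + 2 * (k:ℝ)) / ((Nat.factorial k : ℝ) * Real.Gamma (ν - 1 + (k:ℝ) + 1))
        - (ν/t) * ((t/2) ^ (ν + 2 * (k:ℝ)) / ((Nat.factorial k : ℝ) * Real.Gamma (ν + (k:ℝ) + 1)))) by
    rw [Summable.tsum_sub hs1 hs2, tsum_mul_left]; rfl]
  apply tsum_congr
  intro k
  have hk : (0:ℝ) ≤ (k:ℝ) := Nat.cast_nonneg k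
  have hΓpos : 0 < Real.Gamma (ν + (k:ℝ)) := Real.Gamma_pos_of_pos (by linarith)
  have hG : Real.Gamma (ν + (k:ℝ) + 1) = (ν + (k:ℝ)) * Real.Gamma (ν + (k:ℝ)) :=
    Real.Gamma_add_one (ne_of_gt (show (0:ℝ) < ν + (k:ℝ) by linarith))
  have hG2 : Real.Gamma (ν - 1 + (k:ℝ) + 1) = Real.Gamma (ν + (k:ℝ)) := by
    rw [show ν - 1 + (k:ℝ) + 1 = ν + (k:ℝ) by ring]
  have hE1 : (t/2) ^ (ν - 1 + 2 * (k:ℝ)) = (t/2) ^ (ν + 2 * (k:ℝ) - 1) := by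
    rw [show ν - 1 + 2 * (k:ℝ) = ν + 2 * (k:ℝ) - 1 by ring]
  have hE2 : (t/2) ^ (ν + 2 * (k:ℝ)) = (t/2) ^ (ν + 2 * (k:ℝ) - 1) * (t/2) := by
    rw [← Real.rpow_add_one ht2.ne']; ring_nf
  rw [hG2, hE1, hE2, hG]
  have hF : (0:ℝ) < (Nat.factorial k : ℝ) := by exact_mod_cast Nat.factorial_pos k
  have hνk : (0:ℝ) < ν + (k:ℝ) := by linarith
  field_simp
  ring

private lemma hasDerivAt_besselI_bot (ν t : ℝ) (hν : 1/2 < ν) (ht : 0 < t) :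
    HasDerivAt (besselI (ν-1)) (besselI ν t + ((ν-1)/t) * besselI (ν-1) t) t := by
  have hν' : -(1/2) < ν := by linarith
  have hν1 : -(1/2) < ν - 1 := by linarith
  have ht2 : 0 < t/2 := by linarith
  have h := hasDerivAt_besselI (ν-1) t hν1 ht
  convert h using 1
  -- D k = k * (t/2)^(ν-1+2k-1) / (k! * Γ(ν-1+k+1))
  set D : ℕ → ℝ := fun k => (k:ℝ) * ((t/2) ^ (ν - 1 + 2 * (k:ℝ) - 1) / ((Nat.factorial k : ℝ) * Real.Gamma (ν - 1 + (k:ℝ) + 1))) with hD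
  have hDshift : ∀ k : ℕ, D (k+1) = (t/2) ^ (ν + 2 * (k:ℝ)) / ((Nat.factorial k : ℝ) * Real.Gamma (ν + (k:ℝ) + 1)) := by
    intro k
    have hk : (0:ℝ) ≤ (k:ℝ) := Nat.cast_nonneg k
    have hF : (0:ℝ) < (Nat.factorial k : ℝ) := by exact_mod_cast Nat.factorial_pos k
    have hΓpos : 0 < Real.Gamma (ν + (k:ℝ) + 1) := Real.Gamma_pos_of_pos (by linarith)
    simp only [hD]
    have hc : ((k+1 : ℕ) : ℝ) = (k:ℝ) + 1 := by push_cast; ring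
    rw [hc]
    have hfac : ((Nat.factorial (k+1) : ℕ) : ℝ) = ((k:ℝ)+1) * (Nat.factorial k : ℝ) := by
      rw [Nat.factorial_succ]; push_cast; ring
    rw [hfac]
    have hE : ν - 1 + 2 * ((k:ℝ)+1) - 1 = ν + 2 * (k:ℝ) := by ring
    have hGE : ν - 1 + ((k:ℝ)+1) + 1 = ν + (k:ℝ) + 1 := by ring
    rw [hE, hGE]
    field_simp
  have hsD : Summable D := by
    apply (_root_.summable_nat_add_iff 1).mp
    have : (fun n : ℕ => D (n+1)) = fun k : ℕ => (t/2) ^ (ν + 2 * (k:ℝ)) / ((Nat.factorial k : ℝ) * Real.Gamma (ν + (k:ℝ) + 1)) := funext hDshift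
    rw [this]
    exact besselI_summable ν t hν' ht
  have hs1 := (besselI_summable (ν-1) t hν1 ht).mul_left ((ν-1)/t)
  have hstep : ∀ k : ℕ, (ν - 1 + 2 * (k:ℝ))/2 * ((t/2) ^ (ν - 1 + 2 * (k:ℝ) - 1) / ((Nat.factorial k : ℝ) * Real.Gamma (ν - 1 + (k:ℝ) + 1)))
      = D k + ((ν-1)/t) * ((t/2) ^ (ν - 1 + 2 * (k:ℝ)) / ((Nat.factorial k : ℝ) * Real.Gamma (ν - 1 + (k:ℝ) + 1))) := by
    intro k
    have hk : (0:ℝ) ≤ (k:ℝ) := Nat.cast_nonneg k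
    have hF : (0:ℝ) < (Nat.factorial k : ℝ) := by exact_mod_cast Nat.factorial_pos k
    have hΓpos : 0 < Real.Gamma (ν - 1 + (k:ℝ) + 1) := Real.Gamma_pos_of_pos (by linarith)
    have hE2 : (t/2) ^ (ν - 1 + 2 * (k:ℝ)) = (t/2) ^ (ν - 1 + 2 * (k:ℝ) - 1) * (t/2) := by
      rw [← Real.rpow_add_one ht2.ne']; ring_nf
    rw [hE2]
    simp only [hD]
    field_simp
    ring
  calc besselI ν t + ((ν-1)/t) * besselI (ν-1) t
      = (∑' k : ℕ, D k) + ∑' k : ℕ, ((ν-1)/t) * ((t/2) ^ (ν - 1 + 2 * (k:ℝ)) / ((Nat.factorial k : ℝ) * Real.Gamma (ν - 1 + (k:ℝ) + 1))) := by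
        congr 1
        · rw [Summable.tsum_eq_zero_add hsD]
          simp only [hD, Nat.cast_zero, zero_mul, zero_add]
          exact (tsum_congr hDshift).symm
        · rw [tsum_mul_left]; rfl
    _ = ∑' k : ℕ, (D k + ((ν-1)/t) * ((t/2) ^ (ν - 1 + 2 * (k:ℝ)) / ((Nat.factorial k : ℝ) * Real.Gamma (ν - 1 + (k:ℝ) + 1)))) := by
        rw [Summable.tsum_add hsD hs1]
    _ = ∑' k : ℕ, (ν - 1 + 2 * (k:ℝ))/2 * ((t/2) ^ (ν - 1 + 2 * (k:ℝ) - 1) / ((Nat.factorial k : ℝ) * Real.Gamma (ν - 1 + (k:ℝ) + 1))) := by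
        exact (tsum_congr hstep).symm

private lemma hasDerivAt_besselRatio (ν t : ℝ) (hν : 1/2 < ν) (ht : 0 < t) :
    HasDerivAt (besselRatio ν)
      (1 - (2*ν-1)/t * besselRatio ν t - (besselRatio ν t)^2) t := by
  have hB : 0 < besselI (ν-1) t := besselI_pos (ν-1) t (by linarith) ht
  have h := (hasDerivAt_besselI_top ν t hν ht).div (hasDerivAt_besselI_bot ν t hν ht) hB.ne'
  have heq : besselRatio ν = fun s => besselI ν s / besselI (ν-1) s := rfl
  rw [heq]
  refine h.congr_deriv ?_
  simp only
  field_simp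
  ring

/-- for `ν > 1/2` and `t > 0`,
`h'_ν(t) = -((2ν-1)/t²) l_ν(t) - ((2ν-1)/t + 2 r_ν(t)) h_ν(t)`, where
`h_ν(t) = 1 - (2ν-1)/t² - ((2ν-1)/t) r_ν(t) - r_ν(t)²` and `l_ν(t) = r_ν(t) - (3-2ν)/t`. -/
theorem deriv_h_identity (ν t : ℝ) (hν : 1 / 2 < ν) (ht : 0 < t) :
    deriv (fun s : ℝ => 1 - (2 * ν - 1) / s ^ 2 - (2 * ν - 1) / s * besselRatio ν s
        - (besselRatio ν s) ^ 2) t =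
      -((2 * ν - 1) / t ^ 2) * (besselRatio ν t - (3 - 2 * ν) / t)
        - ((2 * ν - 1) / t + 2 * besselRatio ν t) *
          (1 - (2 * ν - 1) / t ^ 2 - (2 * ν - 1) / t * besselRatio ν t
            - (besselRatio ν t) ^ 2) := by
  have hr := hasDerivAt_besselRatio ν t hν ht
  have h1 : HasDerivAt (fun s : ℝ => (2 * ν - 1) / s ^ 2)
      ((0 * t^2 - (2*ν-1) * ((2:ℕ) * t^(2-1))) / (t^2)^2) t :=
    (hasDerivAt_const t (2*ν-1)).div (hasDerivAt_pow 2 t) (pow_ne_zero 2 ht.ne')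
  have h2 : HasDerivAt (fun s : ℝ => (2 * ν - 1) / s)
      ((0 * t - (2*ν-1) * 1) / t^2) t :=
    (hasDerivAt_const t (2*ν-1)).div (hasDerivAt_id' t) ht.ne'
  have H := (((hasDerivAt_const t (1:ℝ)).sub h1).sub (h2.mul hr)).sub (hr.pow 2)
  rw [(show HasDerivAt (fun s : ℝ => 1 - (2 * ν - 1) / s ^ 2 - (2 * ν - 1) / s * besselRatio ν s
        - (besselRatio ν s) ^ 2) _ t from H).deriv]
  have ht' : t ≠ 0 := ht.ne'
  field_simp
  ring
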